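/- Let α > 0 and let h : [r₀, r₁] → ℝ be a C¹ function with r₁^α · |h(r₁)|² ≤ D₀. Then (2/α)·r₀^α·|h(r₀)|² + ∫_{r₀}^{r₁} r^{α−1} |h(r)|² dr ≤ (4/α²) ∫_{r₀}^{r₁} r^{α+1} |h'(r)|² dr + (2/α)·D₀. -/

import Mathlib

/-!
With `F r = r^α h(r)²` one has `F' = α r^(α-1) h² + 2 r^α h h'`, and completing the square,
`α/2 r^(α-1) h² + 2 r^α h h' + 2/α r^(α+1) h'² = r^(α-1)/(2α) (α h + 2 r h')² ≥ 0`,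
gives `F' ≥ α/2 r^(α-1) h² - 2/α r^(α+1) h'²`. Integrating over `[r₀, r₁]` and using
`F r₁ ≤ D₀` yields the inequality after multiplication by `2/α`.
-/

open Set intervalIntegral
open MeasureTheory (volume)

theorem hasDerivAt_rpow_mul_sq {f : ℝ → ℝ} {f' x : ℝ} (α : ℝ) (hx : x ≠ 0)
    (hf : HasDerivAt f f' x) :
    HasDerivAt (fun r => r ^ α * f r ^ 2)
      (α * (x ^ (α - 1) * f x ^ 2) + 2 * x ^ α * (f x * f')) x := by
  refine ((Real.hasDerivAt_rpow_const (Or.inl hx)).fun_mul (hf.fun_pow 2)).congr_deriv ?_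
  push_cast
  ring

theorem rpow_mul_sq_sub_le {α r : ℝ} (hα : 0 < α) (hr : 0 < r) (x y : ℝ) :
    α / 2 * (r ^ (α - 1) * x ^ 2) - 2 / α * (r ^ (α + 1) * y ^ 2)
      ≤ α * (r ^ (α - 1) * x ^ 2) + 2 * r ^ α * (x * y) := by
  have hsquare : α / 2 * (r ^ (α - 1) * x ^ 2) + 2 * r ^ α * (x * y)
      + 2 / α * (r ^ (α + 1) * y ^ 2) = r ^ α / (2 * α * r) * (α * x + 2 * r * y) ^ 2 := by
    rw [Real.rpow_sub hr, Real.rpow_add hr, Real.rpow_one]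
    field_simp
    ring
  have hnonneg : 0 ≤ r ^ α / (2 * α * r) * (α * x + 2 * r * y) ^ 2 := by positivity
  linarith

theorem integral_rpow_mul_sq_sub_le {α r₀ r₁ : ℝ} {h h' : ℝ → ℝ}
    (hα : 0 < α) (hr₀ : 0 < r₀) (hr : r₀ ≤ r₁)
    (hderiv : ∀ r ∈ Icc r₀ r₁, HasDerivAt h (h' r) r)
    (hcont : ContinuousOn h' (Icc r₀ r₁)) :
    α / 2 * (∫ r in r₀..r₁, r ^ (α - 1) * h r ^ 2)
        - 2 / α * ∫ r in r₀..r₁, r ^ (α + 1) * h' r ^ 2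
      ≤ r₁ ^ α * h r₁ ^ 2 - r₀ ^ α * h r₀ ^ 2 := by
  have hpos : ∀ r ∈ Icc r₀ r₁, 0 < r := fun r hr' => hr₀.trans_le hr'.1
  have hcont_h : ContinuousOn h (Icc r₀ r₁) := fun r hr' =>
    (hderiv r hr').continuousAt.continuousWithinAt
  have hcont_rpow (β : ℝ) : ContinuousOn (fun r : ℝ => r ^ β) (Icc r₀ r₁) :=
    continuousOn_id.rpow_const fun r hr' => Or.inl (hpos r hr').ne'
  have hcont_I : ContinuousOn (fun r => r ^ (α - 1) * h r ^ 2) (Icc r₀ r₁) :=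
    (hcont_rpow _).mul (hcont_h.pow 2)
  have hcont_J : ContinuousOn (fun r => r ^ (α + 1) * h' r ^ 2) (Icc r₀ r₁) :=
    (hcont_rpow _).mul (hcont.pow 2)
  have hint_I := (hcont_I.intervalIntegrable_of_Icc (μ := volume) hr).const_mul (α / 2)
  have hint_J := (hcont_J.intervalIntegrable_of_Icc (μ := volume) hr).const_mul (2 / α)
  rw [← integral_const_mul, ← integral_const_mul, ← integral_sub hint_I hint_J]
  refine integral_le_sub_of_hasDeriv_right_of_le hr ((hcont_rpow α).mul (hcont_h.pow 2))
    (fun r hr' => ?_)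
    ((continuousOn_const.mul hcont_I).sub (continuousOn_const.mul hcont_J)).integrableOn_Icc
    (fun r hr' => rpow_mul_sq_sub_le hα (hpos r (Ioo_subset_Icc_self hr')) _ _)
  have hr_mem := Ioo_subset_Icc_self hr'
  exact (hasDerivAt_rpow_mul_sq α (hpos r hr_mem).ne' (hderiv r hr_mem)).hasDerivWithinAt

theorem hardy_inequality_left_boundary_general
    (α r₀ r₁ D₀ : ℝ) (h h' : ℝ → ℝ)
    (hα : 0 < α) (hr₀ : 0 < r₀) (hr : r₀ ≤ r₁)
    (hderiv : ∀ r ∈ Set.Icc r₀ r₁, HasDerivAt h (h' r) r)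
    (hcont : ContinuousOn h' (Set.Icc r₀ r₁))
    (hbdry : r₁ ^ α * |h r₁| ^ 2 ≤ D₀) :
    (2 / α) * r₀ ^ α * |h r₀| ^ 2 + ∫ r in r₀..r₁, r ^ (α - 1) * |h r| ^ 2
      ≤ (4 / α ^ 2) * (∫ r in r₀..r₁, r ^ (α + 1) * |h' r| ^ 2) + (2 / α) * D₀ := by
  simp only [sq_abs] at hbdry ⊢
  have hkey := integral_rpow_mul_sq_sub_le hα hr₀ hr hderiv hcont
  set I := ∫ r in r₀..r₁, r ^ (α - 1) * h r ^ 2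
  set J := ∫ r in r₀..r₁, r ^ (α + 1) * h' r ^ 2
  calc 2 / α * r₀ ^ α * h r₀ ^ 2 + I
      = 2 / α * (α / 2 * I + r₀ ^ α * h r₀ ^ 2) := by field_simp; ring
    _ ≤ 2 / α * (2 / α * J + D₀) := by gcongr 2 / α * ?_; linarith
    _ = 4 / α ^ 2 * J + 2 / α * D₀ := by ring

/-- One-dimensional Hardy inequality with boundary term at the left endpoint
(Lemma `HardyIneqRHS`): for `α > 0` and `h` a `C¹` function on `[r₀, r₁]` with
`r₁^α |h(r₁)|² ≤ D₀`, one has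
`(2/α) r₀^α |h(r₀)|² + ∫_{r₀}^{r₁} r^{α−1} |h(r)|² dr
  ≤ (4/α²) ∫_{r₀}^{r₁} r^{α+1} |h'(r)|² dr + (2/α) D₀`. -/
theorem hardy_inequality_left_boundary
    (α r₀ r₁ D₀ : ℝ) (h h' : ℝ → ℝ)
    (hα : 0 < α) (hr₀ : 0 < r₀) (hr : r₀ ≤ r₁) (hD₀ : 0 ≤ D₀)
    (hderiv : ∀ r ∈ Set.Icc r₀ r₁, HasDerivAt h (h' r) r)
    (hcont : ContinuousOn h' (Set.Icc r₀ r₁))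
    (hbdry : r₁ ^ α * |h r₁| ^ 2 ≤ D₀) :
    (2 / α) * r₀ ^ α * |h r₀| ^ 2 + ∫ r in r₀..r₁, r ^ (α - 1) * |h r| ^ 2
      ≤ (4 / α ^ 2) * (∫ r in r₀..r₁, r ^ (α + 1) * |h' r| ^ 2) + (2 / α) * D₀ :=
  hardy_inequality_left_boundary_general α r₀ r₁ D₀ h h' hα hr₀ hr hderiv hcont hbdry
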